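/- Let n ≥ 3 be an integer, q ∈ (0,1), γ the unique positive root of γ(γ+n−2) = q·β₀(β₀+n−2), and k ∈ (0, (n−2)/2). Then there exists a constant c_B(k) > 0 (one may take c_B(k) = 2k·min(n+2γ, n+2γ−2k−2)) such that for every x ≠ 0, Δ(|x|^γ(1+|x|²)^{−k}) − qL₁^{q−1}|x|^{−2}·|x|^γ(1+|x|²)^{−k} ≤ −c_B(k)·|x|^γ(1+|x|²)^{−(1+k)}. -/

import Mathlib

/-!
Write the function as `g(|x|²)` with `g(t) = t^(γ/2) (1+t)^(-k)`, so that its Laplacian is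
`2n g'(s) + 4s g''(s)` at `s = |x|²`. Since `q L₁^(q-1) = q β₀(β₀+n-2) = γ(γ+n-2)`, the choice of
`γ` makes the leading singular terms cancel, and what remains is
`-2k ((n+2γ) + (n+2γ-2k-2) s) s^(γ/2) (1+s)^(-k-2)`, which is at most
`-c_B s^(γ/2) (1+s)^(-k-1)` because `c_B (1+s)` is bounded by the bracket.
-/

/-- The Laplacian of `f : ℝⁿ → ℝ` at `x`: the sum of the second partial derivatives
`∂²f/∂xᵢ²` in the coordinate directions. -/
noncomputable def laplacian {n : ℕ} (f : EuclideanSpace ℝ (Fin n) → ℝ)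
    (x : EuclideanSpace ℝ (Fin n)) : ℝ :=
  ∑ i : Fin n,
    fderiv ℝ (fun y => fderiv ℝ f y (EuclideanSpace.single i 1)) x (EuclideanSpace.single i 1)

open Filter Topology

theorem hasFDerivAt_comp_norm_sq {n : ℕ} {g : ℝ → ℝ} {g' : ℝ} {x : EuclideanSpace ℝ (Fin n)}
    (hg : HasDerivAt g g' (‖x‖ ^ 2)) :
    HasFDerivAt (fun y => g (‖y‖ ^ 2)) (g' • 2 • innerSL ℝ x) x :=
  hg.comp_hasFDerivAt x (hasStrictFDerivAt_norm_sq x).hasFDerivAt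

theorem laplacian_comp_norm_sq {n : ℕ} {g g' : ℝ → ℝ} {g'' : ℝ} {x : EuclideanSpace ℝ (Fin n)}
    (hg : ∀ᶠ t in 𝓝 (‖x‖ ^ 2), HasDerivAt g (g' t) t) (hg' : HasDerivAt g' g'' (‖x‖ ^ 2)) :
    laplacian (fun y => g (‖y‖ ^ 2)) x = 2 * n * g' (‖x‖ ^ 2) + 4 * ‖x‖ ^ 2 * g'' := by
  have hg_near : ∀ᶠ y in 𝓝 x, HasDerivAt g (g' (‖y‖ ^ 2)) (‖y‖ ^ 2) :=
    ((continuous_norm.pow 2).tendsto x).eventually hg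
  have second_partial (i : Fin n) :
      fderiv ℝ (fun y => fderiv ℝ (fun z => g (‖z‖ ^ 2)) y (EuclideanSpace.single i 1)) x
          (EuclideanSpace.single i 1) = 2 * g' (‖x‖ ^ 2) + 4 * g'' * x i ^ 2 := by
    have first_partial : (fun y => fderiv ℝ (fun z => g (‖z‖ ^ 2)) y (EuclideanSpace.single i 1))
        =ᶠ[𝓝 x] fun y => g' (‖y‖ ^ 2) * (2 * y i) := by
      filter_upwards [hg_near] with y hy
      rw [(hasFDerivAt_comp_norm_sq hy).fderiv]
      simp [EuclideanSpace.inner_single_right]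
    have : HasFDerivAt (fun y : EuclideanSpace ℝ (Fin n) => g' (‖y‖ ^ 2) * (2 * y i)) _ x :=
      (hasFDerivAt_comp_norm_sq hg').mul
      ((EuclideanSpace.proj (𝕜 := ℝ) i).hasFDerivAt.const_mul (2 : ℝ))
    rw [first_partial.fderiv_eq, this.fderiv]
    simp only [add_apply, smul_apply, PiLp.proj_apply,
      PiLp.single_eq_same, smul_eq_mul, mul_one, coe_innerSL_apply,
      EuclideanSpace.inner_single_right, Real.ringHom_apply, one_mul, nsmul_eq_mul, Nat.cast_ofNat]
    ring
  simp only [laplacian, second_partial, Finset.sum_add_distrib, ← Finset.mul_sum,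
    ← EuclideanSpace.real_norm_sq_eq, Finset.sum_const, Finset.card_univ, Fintype.card_fin,
    nsmul_eq_mul]
  ring

noncomputable def weight (a b t : ℝ) : ℝ := t ^ a * (1 + t) ^ b

noncomputable def weightDeriv (a b t : ℝ) : ℝ := a * weight (a - 1) b t + b * weight a (b - 1) t

noncomputable def weightDeriv2 (a b t : ℝ) : ℝ :=
  a * weightDeriv (a - 1) b t + b * weightDeriv a (b - 1) t

theorem weight_pos (a b : ℝ) {t : ℝ} (ht : 0 < t) : 0 < weight a b t := by
  unfold weight; positivity

theorem hasDerivAt_weight (a b : ℝ) {t : ℝ} (ht : 0 < t) :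
    HasDerivAt (weight a b) (weightDeriv a b t) t := by
  have hpow := ((hasDerivAt_id t).const_add 1).rpow_const (p := b) (Or.inl (by positivity))
  refine ((Real.hasDerivAt_rpow_const (Or.inl ht.ne')).mul hpow).congr_deriv ?_
  simp only [weightDeriv, weight, id]
  ring

theorem hasDerivAt_weightDeriv (a b : ℝ) {t : ℝ} (ht : 0 < t) :
    HasDerivAt (weightDeriv a b) (weightDeriv2 a b t) t :=
  ((hasDerivAt_weight _ _ ht).const_mul a).add ((hasDerivAt_weight _ _ ht).const_mul b)

theorem weight_radial_operator_eq (n γ k : ℝ) {s : ℝ} (hs : 0 < s) :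
    2 * n * weightDeriv (γ / 2) (-k) s + 4 * s * weightDeriv2 (γ / 2) (-k) s
      - γ * (γ + n - 2) * s⁻¹ * weight (γ / 2) (-k) s
    = -(2 * k * (n + 2 * γ) + 2 * k * (n + 2 * γ - 2 * k - 2) * s)
        * weight (γ / 2) (-k - 2) s := by
  have h1s : 1 + s ≠ 0 := by positivity
  rw [show -k - 2 = -k - 1 - 1 by ring]
  simp only [weightDeriv2, weightDeriv, weight, Real.rpow_sub_one hs.ne',
    Real.rpow_sub_one h1s]
  field_simp
  ring

theorem weight_radial_operator_le (n γ k c : ℝ) {s : ℝ} (hs : 0 < s)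
    (hc₁ : c ≤ 2 * k * (n + 2 * γ)) (hc₂ : c ≤ 2 * k * (n + 2 * γ - 2 * k - 2)) :
    2 * n * weightDeriv (γ / 2) (-k) s + 4 * s * weightDeriv2 (γ / 2) (-k) s
      - γ * (γ + n - 2) * s⁻¹ * weight (γ / 2) (-k) s ≤ -c * weight (γ / 2) (-(1 + k)) s := by
  have h1s : 1 + s ≠ 0 := by positivity
  have hshift : weight (γ / 2) (-(1 + k)) s = (1 + s) * weight (γ / 2) (-k - 2) s := by
    rw [show -k - 2 = -(1 + k) - 1 by ring]
    simp only [weight, Real.rpow_sub_one h1s]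
    field_simp
  have hc : c * (1 + s) ≤ 2 * k * (n + 2 * γ) + 2 * k * (n + 2 * γ - 2 * k - 2) * s := by
    nlinarith
  rw [weight_radial_operator_eq n γ k hs, hshift]
  nlinarith [mul_le_mul_of_nonneg_right hc (weight_pos (γ / 2) (-k - 2) hs).le]

theorem rpow_eq_sq_rpow_half {r : ℝ} (hr : 0 ≤ r) (γ : ℝ) : r ^ γ = (r ^ 2) ^ (γ / 2) := by
  rw [← Real.rpow_natCast_mul hr, Nat.cast_ofNat, mul_div_cancel₀ γ two_ne_zero]

theorem steady_linearized_weighted_supersolution_general (n : ℕ) (hn : 3 ≤ n)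
    (q : ℝ) (hq1 : q < 1)
    (β₀ L₁ γ : ℝ) (hβ₀ : β₀ = 2 / (1 - q))
    (hL₁ : L₁ = (β₀ * (β₀ + (n : ℝ) - 2)) ^ (-(1 / (1 - q))))
    (hγpos : 0 < γ) (hγ : γ * (γ + (n : ℝ) - 2) = q * (β₀ * (β₀ + (n : ℝ) - 2)))
    (k : ℝ) (hk0 : 0 < k) (hk1 : k < ((n : ℝ) - 2) / 2)
    (cB : ℝ) (hcB : cB = 2 * k * min ((n : ℝ) + 2 * γ) ((n : ℝ) + 2 * γ - 2 * k - 2)) :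
    0 < cB ∧
    ∀ x : EuclideanSpace ℝ (Fin n), x ≠ 0 →
      laplacian (fun y => ‖y‖ ^ γ * (1 + ‖y‖ ^ 2) ^ (-k)) x
        - q * L₁ ^ (q - 1) * ‖x‖ ^ (-2 : ℝ) * (‖x‖ ^ γ * (1 + ‖x‖ ^ 2) ^ (-k))
      ≤ -cB * (‖x‖ ^ γ * (1 + ‖x‖ ^ 2) ^ (-(1 + k))) := by
  have hn3 : (3 : ℝ) ≤ n := by exact_mod_cast hn
  have hβ₀pos : 0 < β₀ := hβ₀ ▸ div_pos two_pos (sub_pos.2 hq1)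
  have hqL : q * L₁ ^ (q - 1) = γ * (γ + n - 2) := by
    have hM : 0 ≤ β₀ * (β₀ + n - 2) := by nlinarith
    have hq : 1 - q ≠ 0 := (sub_pos.2 hq1).ne'
    rw [hL₁, ← Real.rpow_mul hM, show -(1 / (1 - q)) * (q - 1) = 1 by field_simp; ring,
      Real.rpow_one, hγ]
  have hc₁ : cB ≤ 2 * k * (n + 2 * γ) :=
    hcB ▸ mul_le_mul_of_nonneg_left (min_le_left _ _) (by positivity)
  have hc₂ : cB ≤ 2 * k * (n + 2 * γ - 2 * k - 2) :=
    hcB ▸ mul_le_mul_of_nonneg_left (min_le_right _ _) (by positivity)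
  refine ⟨hcB ▸ mul_pos (by positivity) (lt_min (by linarith) (by linarith)), fun x hx => ?_⟩
  have hs : 0 < ‖x‖ ^ 2 := by positivity
  have hf : (fun y : EuclideanSpace ℝ (Fin n) => ‖y‖ ^ γ * (1 + ‖y‖ ^ 2) ^ (-k))
      = fun y => weight (γ / 2) (-k) (‖y‖ ^ 2) := by
    funext y
    rw [weight, rpow_eq_sq_rpow_half (norm_nonneg y)]
  rw [hf, laplacian_comp_norm_sq ((lt_mem_nhds hs).mono fun t ht => hasDerivAt_weight _ _ ht)
    (hasDerivAt_weightDeriv _ _ hs), hqL,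
    Real.rpow_neg (norm_nonneg x), Real.rpow_two, rpow_eq_sq_rpow_half (norm_nonneg x) γ]
  have key := weight_radial_operator_le n γ k cB hs hc₁ hc₂
  simp only [weight] at key ⊢
  linarith

/-- For `k ∈ (0, (n−2)/2)` there is a constant `c_B(k) > 0` — one may take
`c_B(k) = 2k·min(n+2γ, n+2γ−2k−2)` — such that for every `x ≠ 0`,
`Δ(|x|^γ(1+|x|²)^{−k}) − qL₁^{q−1}|x|^{−2}|x|^γ(1+|x|²)^{−k}
  ≤ −c_B(k)|x|^γ(1+|x|²)^{−(1+k)}`. -/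
theorem steady_linearized_weighted_supersolution (n : ℕ) (hn : 3 ≤ n)
    (q : ℝ) (hq0 : 0 < q) (hq1 : q < 1)
    (β₀ L₁ γ : ℝ) (hβ₀ : β₀ = 2 / (1 - q))
    (hL₁ : L₁ = (β₀ * (β₀ + (n : ℝ) - 2)) ^ (-(1 / (1 - q))))
    (hγpos : 0 < γ) (hγ : γ * (γ + (n : ℝ) - 2) = q * (β₀ * (β₀ + (n : ℝ) - 2)))
    (k : ℝ) (hk0 : 0 < k) (hk1 : k < ((n : ℝ) - 2) / 2)
    (cB : ℝ) (hcB : cB = 2 * k * min ((n : ℝ) + 2 * γ) ((n : ℝ) + 2 * γ - 2 * k - 2)) :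
    0 < cB ∧
    ∀ x : EuclideanSpace ℝ (Fin n), x ≠ 0 →
      laplacian (fun y => ‖y‖ ^ γ * (1 + ‖y‖ ^ 2) ^ (-k)) x
        - q * L₁ ^ (q - 1) * ‖x‖ ^ (-2 : ℝ) * (‖x‖ ^ γ * (1 + ‖x‖ ^ 2) ^ (-k))
      ≤ -cB * (‖x‖ ^ γ * (1 + ‖x‖ ^ 2) ^ (-(1 + k))) :=
  steady_linearized_weighted_supersolution_general n hn q hq1 β₀ L₁ γ hβ₀ hL₁ hγpos hγ k hk0 hk1 cB
    hcB
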